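/- arXiv:2204.08921 — 2 statements merged into one kernel-verified Lean document; each statement's English description precedes it below -/
import Mathlib

section
/- Let e_i, e_j, e_k ∈ {0,1} and let τ_i, τ_j, τ_k be unit vectors in ℝ² such that for each ordered pair (a,b) ∈ {(i,j), (j,k), (k,i)} one has ⟨τ_a, τ_b⟩ = −(1/2)·(−1)^{e_a+e_b} and ⟨τ_a, Rτ_b⟩ = −(√3/2)·(−1)^{e_a+e_b}. Suppose real numbers N_i, N_j, N_k, T_i, T_j, T_k satisfy the four identities: T_i = −(1/√3)N_i − (2/√3)(−1)^{e_i+e_j}N_j; T_j = (2/√3)(−1)^{e_i+e_j}N_i + (1/√3)N_j; T_k = −(1/√3)(−1)^{e_i+e_k}N_i + (1/√3)(−1)^{e_j+e_k}N_j; and (−1)^{e_i}N_i + (−1)^{e_j}N_j + (−1)^{e_k}N_k = 0. Then the three vectors coincide: N_i·Rτ_i + T_i·τ_i = N_j·Rτ_j + T_j·τ_j = N_k·Rτ_k + T_k·τ_k. -/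
open scoped RealInnerProductSpace

/-!
For a unit vector `u`, the vectors `u` and `Rot u` form an orthonormal frame, and in it
`N • Rot v + T • v` has coordinates `N ⟪u, v⟫ - T ⟪u, Rot v⟫` and `N ⟪u, Rot v⟫ + T ⟪u, v⟫`.
When `u` and `v` meet at angle `2π/3` (up to the orientation signs), these coordinates agree with
`(N', T')` as soon as `T'` and `T` are the stated combinations of `N'` and `N`. This settles the
pair `(i, j)`; the balance condition `∑ (-1)^e N = 0` turns the relations for `Tj`, `Tk` into the
same relations for the pair `(j, k)`.
-/

/-- The point of `ℝ²` (as `EuclideanSpace ℝ (Fin 2)`) with coordinates `a`, `b`. -/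
noncomputable def vec2 (a b : ℝ) : EuclideanSpace ℝ (Fin 2) :=
  (WithLp.equiv 2 (Fin 2 → ℝ)).symm ![a, b]

/-- Counterclockwise rotation by `π/2` in `ℝ²`: `R(a,b) = (−b,a)`. -/
noncomputable def Rot (v : EuclideanSpace ℝ (Fin 2)) : EuclideanSpace ℝ (Fin 2) :=
  vec2 (-(v 1)) (v 0)

@[simp] lemma rot_apply_zero (v : EuclideanSpace ℝ (Fin 2)) : Rot v 0 = -v 1 := by
  simp [Rot, vec2]

@[simp] lemma rot_apply_one (v : EuclideanSpace ℝ (Fin 2)) : Rot v 1 = v 0 := by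
  simp [Rot, vec2]

lemma EuclideanSpace.real_inner_fin_two (u v : EuclideanSpace ℝ (Fin 2)) :
    ⟪u, v⟫ = u 0 * v 0 + u 1 * v 1 := by
  simp [PiLp.inner_apply, Fin.sum_univ_two, mul_comm]

lemma smul_rot_add_smul_eq_of_norm_eq_one {u : EuclideanSpace ℝ (Fin 2)} (hu : ‖u‖ = 1)
    (v : EuclideanSpace ℝ (Fin 2)) (N T : ℝ) :
    N • Rot v + T • v =
      (N * ⟪u, v⟫ - T * ⟪u, Rot v⟫) • Rot u + (N * ⟪u, Rot v⟫ + T * ⟪u, v⟫) • u := by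
  have hu2 : u 0 * u 0 + u 1 * u 1 = 1 := by
    rw [← EuclideanSpace.real_inner_fin_two, real_inner_self_eq_norm_sq, hu, one_pow]
  simp only [EuclideanSpace.real_inner_fin_two, rot_apply_zero, rot_apply_one]
  ext l
  fin_cases l
  · simp only [Fin.zero_eta, PiLp.add_apply, PiLp.smul_apply, rot_apply_zero, smul_eq_mul]
    linear_combination (N * v 1 - T * v 0) * hu2
  · simp only [Fin.mk_one, PiLp.add_apply, PiLp.smul_apply, rot_apply_one, smul_eq_mul]
    linear_combination (-(N * v 0) - T * v 1) * hu2

theorem smul_rot_add_smul_eq_of_junction {u v : EuclideanSpace ℝ (Fin 2)} (hu : ‖u‖ = 1)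
    {ε : ℝ} (hε : ε * ε = 1)
    (huv : ⟪u, v⟫ = -(1/2) * ε) (huv' : ⟪u, Rot v⟫ = -(Real.sqrt 3 / 2) * ε)
    {N N' T T' : ℝ} (hT' : T' = -(1 / Real.sqrt 3) * N' - (2 / Real.sqrt 3) * ε * N)
    (hT : T = (2 / Real.sqrt 3) * ε * N' + (1 / Real.sqrt 3) * N) :
    N' • Rot u + T' • u = N • Rot v + T • v := by
  have hs : Real.sqrt 3 ^ 2 = 3 := Real.sq_sqrt (by norm_num)
  rw [smul_rot_add_smul_eq_of_norm_eq_one hu v, huv, huv', hT, hT']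
  congr 2
  · field_simp
    linear_combination -2 * N' * hε
  · field_simp
    linear_combination 2 * N' * hε + ε * N * hs

lemma neg_one_pow_mul_self (n : ℕ) : (-1 : ℝ) ^ n * (-1) ^ n = 1 := by
  rw [← mul_pow]; norm_num

theorem stmt1_general
    (ei ej ek : ℕ)
    (τi τj τk : EuclideanSpace ℝ (Fin 2))
    (hτi : ‖τi‖ = 1) (hτj : ‖τj‖ = 1)
    (hij : ⟪τi, τj⟫ = -(1/2) * (-1 : ℝ) ^ (ei + ej))
    (hjk : ⟪τj, τk⟫ = -(1/2) * (-1 : ℝ) ^ (ej + ek))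
    (hij' : ⟪τi, Rot τj⟫ = -(Real.sqrt 3 / 2) * (-1 : ℝ) ^ (ei + ej))
    (hjk' : ⟪τj, Rot τk⟫ = -(Real.sqrt 3 / 2) * (-1 : ℝ) ^ (ej + ek))
    (Ni Nj Nk Ti Tj Tk : ℝ)
    (hTi : Ti = -(1 / Real.sqrt 3) * Ni - (2 / Real.sqrt 3) * (-1 : ℝ) ^ (ei + ej) * Nj)
    (hTj : Tj = (2 / Real.sqrt 3) * (-1 : ℝ) ^ (ei + ej) * Ni + (1 / Real.sqrt 3) * Nj)
    (hTk : Tk = -(1 / Real.sqrt 3) * (-1 : ℝ) ^ (ei + ek) * Ni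
          + (1 / Real.sqrt 3) * (-1 : ℝ) ^ (ej + ek) * Nj)
    (hsum : (-1 : ℝ) ^ ei * Ni + (-1 : ℝ) ^ ej * Nj + (-1 : ℝ) ^ ek * Nk = 0) :
    Ni • Rot τi + Ti • τi = Nj • Rot τj + Tj • τj ∧
    Nj • Rot τj + Tj • τj = Nk • Rot τk + Tk • τk := by
  refine ⟨smul_rot_add_smul_eq_of_junction hτi (neg_one_pow_mul_self _) hij hij' hTi hTj, ?_⟩
  have hTj' : Tj = -(1 / Real.sqrt 3) * Nj - (2 / Real.sqrt 3) * (-1 : ℝ) ^ (ej + ek) * Nk := by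
    rw [hTj]
    linear_combination (2 / Real.sqrt 3) * (-1 : ℝ) ^ ej * hsum
      - (2 / Real.sqrt 3) * Nj * neg_one_pow_mul_self ej
  have hTk' : Tk = (2 / Real.sqrt 3) * (-1 : ℝ) ^ (ej + ek) * Nj + (1 / Real.sqrt 3) * Nk := by
    rw [hTk]
    linear_combination -(1 / Real.sqrt 3) * (-1 : ℝ) ^ ek * hsum
      + (1 / Real.sqrt 3) * Nk * neg_one_pow_mul_self ek
  exact smul_rot_add_smul_eq_of_junction hτj (neg_one_pow_mul_self _) hjk hjk' hTj' hTk'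

/-- **Sufficient junction relations** (Lemma `lem:SufficientConditionsNetwork`): if the tangential
components are adapted to the normal components (the four linear identities below hold), then the
three normal–tangential graphs meet at a common junction point, i.e. the three displacement
vectors coincide. -/
theorem stmt1
    (ei ej ek : ℕ)
    (hei : ei ∈ ({0, 1} : Set ℕ)) (hej : ej ∈ ({0, 1} : Set ℕ)) (hek : ek ∈ ({0, 1} : Set ℕ))
    (τi τj τk : EuclideanSpace ℝ (Fin 2))
    (hτi : ‖τi‖ = 1) (hτj : ‖τj‖ = 1) (hτk : ‖τk‖ = 1)
    (hij : ⟪τi, τj⟫ = -(1/2) * (-1 : ℝ) ^ (ei + ej))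
    (hjk : ⟪τj, τk⟫ = -(1/2) * (-1 : ℝ) ^ (ej + ek))
    (hki : ⟪τk, τi⟫ = -(1/2) * (-1 : ℝ) ^ (ek + ei))
    (hij' : ⟪τi, Rot τj⟫ = -(Real.sqrt 3 / 2) * (-1 : ℝ) ^ (ei + ej))
    (hjk' : ⟪τj, Rot τk⟫ = -(Real.sqrt 3 / 2) * (-1 : ℝ) ^ (ej + ek))
    (hki' : ⟪τk, Rot τi⟫ = -(Real.sqrt 3 / 2) * (-1 : ℝ) ^ (ek + ei))
    (Ni Nj Nk Ti Tj Tk : ℝ)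
    (hTi : Ti = -(1 / Real.sqrt 3) * Ni - (2 / Real.sqrt 3) * (-1 : ℝ) ^ (ei + ej) * Nj)
    (hTj : Tj = (2 / Real.sqrt 3) * (-1 : ℝ) ^ (ei + ej) * Ni + (1 / Real.sqrt 3) * Nj)
    (hTk : Tk = -(1 / Real.sqrt 3) * (-1 : ℝ) ^ (ei + ek) * Ni
          + (1 / Real.sqrt 3) * (-1 : ℝ) ^ (ej + ek) * Nj)
    (hsum : (-1 : ℝ) ^ ei * Ni + (-1 : ℝ) ^ ej * Nj + (-1 : ℝ) ^ ek * Nk = 0) :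
    Ni • Rot τi + Ti • τi = Nj • Rot τj + Tj • τj ∧
    Nj • Rot τj + Tj • τj = Nk • Rot τk + Tk • τk :=
  stmt1_general ei ej ek τi τj τk hτi hτj hij hjk hij' hjk' Ni Nj Nk Ti Tj Tk hTi hTj hTk hsum
end

section
/- Let U ⊆ ℝ² be open with coordinates (t,x), let v, k : U → ℝ be twice continuously differentiable, let λ : U → ℝ be a function, and assume that on U: v(t,x) ≠ 0, ∂ₜv − ∂ₓ²v = −vk² − 2(∂ₓv)²/v + λ∂ₓv, and ∂ₜk − ∂ₓ²k = λ∂ₓk + k³. Then on U one has the inequality ∂ₜ(v²k²) − ∂ₓ²(v²k²) ≤ (λ − 2(∂ₓv)/v)·∂ₓ(v²k²). -/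
/-!
With `u = v k` the two equations combine into `∂ₜu − ∂ₓ²u = (λ − 2(∂ₓv)/v) ∂ₓu`: the `k³` terms
cancel and the remaining first-order terms collect into `−2(∂ₓv/v)(k ∂ₓv + v ∂ₓk)`. For any
solution `u` of a drift heat equation, `u²` is a subsolution of the same equation, because
`(∂ₜ − ∂ₓ²)(u²) = 2u(∂ₜ − ∂ₓ²)u − 2(∂ₓu)²`.
-/

/-- Partial derivative with respect to the first coordinate `t` of a function of `(t,x)`. -/
noncomputable def pdt (g : ℝ × ℝ → ℝ) (p : ℝ × ℝ) : ℝ :=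
  deriv (fun t => g (t, p.2)) p.1

/-- Partial derivative with respect to the second coordinate `x` of a function of `(t,x)`. -/
noncomputable def pdx (g : ℝ × ℝ → ℝ) (p : ℝ × ℝ) : ℝ :=
  deriv (fun x => g (p.1, x)) p.2

open Topology

noncomputable def heatOp (g : ℝ × ℝ → ℝ) (p : ℝ × ℝ) : ℝ :=
  pdt g p - pdx (pdx g) p

theorem deriv_deriv_mul {f g : ℝ → ℝ} {x : ℝ} (hf : ContDiffAt ℝ 2 f x)
    (hg : ContDiffAt ℝ 2 g x) :
    deriv (deriv fun y => f y * g y) x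
      = deriv (deriv f) x * g x + 2 * (deriv f x * deriv g x) + f x * deriv (deriv g) x := by
  have hfg : deriv (fun y => f y * g y) =ᶠ[𝓝 x] fun y => deriv f y * g y + f y * deriv g y := by
    filter_upwards [hf.eventually (by simp), hg.eventually (by simp)] with y hfy hgy
    exact deriv_fun_mul (hfy.differentiableAt two_ne_zero) (hgy.differentiableAt two_ne_zero)
  have hf' := ((hf.derivWithin (m := 1) le_rfl).differentiableAt one_ne_zero).hasDerivAt
  have hg' := ((hg.derivWithin (m := 1) le_rfl).differentiableAt one_ne_zero).hasDerivAt
  have hf₁ := (hf.differentiableAt two_ne_zero).hasDerivAt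
  have hg₁ := (hg.differentiableAt two_ne_zero).hasDerivAt
  rw [hfg.deriv_eq, ((hf'.fun_mul hg₁).fun_add (hf₁.fun_mul hg')).deriv]
  ring

section PartialDerivatives

variable {f g : ℝ × ℝ → ℝ} {p : ℝ × ℝ}

theorem pdt_mul (hf : DifferentiableAt ℝ f p) (hg : DifferentiableAt ℝ g p) :
    pdt (fun q => f q * g q) p = pdt f p * g p + f p * pdt g p := by
  have hslice : DifferentiableAt ℝ (fun t : ℝ => (t, p.2)) p.1 :=
    differentiableAt_id.prodMk (differentiableAt_const _)
  exact deriv_fun_mul (hf.comp p.1 hslice) (hg.comp p.1 hslice)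

theorem pdx_mul (hf : DifferentiableAt ℝ f p) (hg : DifferentiableAt ℝ g p) :
    pdx (fun q => f q * g q) p = pdx f p * g p + f p * pdx g p := by
  have hslice : DifferentiableAt ℝ (fun x : ℝ => (p.1, x)) p.2 :=
    (differentiableAt_const _).prodMk differentiableAt_id
  exact deriv_fun_mul (hf.comp p.2 hslice) (hg.comp p.2 hslice)

theorem pdx_pdx_mul (hf : ContDiffAt ℝ 2 f p) (hg : ContDiffAt ℝ 2 g p) :
    pdx (pdx fun q => f q * g q) p
      = pdx (pdx f) p * g p + 2 * (pdx f p * pdx g p) + f p * pdx (pdx g) p := by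
  have hslice : ContDiffAt ℝ 2 (fun x : ℝ => (p.1, x)) p.2 :=
    contDiffAt_const.prodMk contDiffAt_id
  exact deriv_deriv_mul (hf.comp p.2 hslice) (hg.comp p.2 hslice)

theorem heatOp_mul (hf : ContDiffAt ℝ 2 f p) (hg : ContDiffAt ℝ 2 g p) :
    heatOp (fun q => f q * g q) p
      = heatOp f p * g p + f p * heatOp g p - 2 * (pdx f p * pdx g p) := by
  rw [heatOp, heatOp, heatOp, pdx_pdx_mul hf hg,
    pdt_mul (hf.differentiableAt two_ne_zero) (hg.differentiableAt two_ne_zero)]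
  ring

theorem heatOp_mul_self_le {c : ℝ} (hf : ContDiffAt ℝ 2 f p) (h : heatOp f p = c * pdx f p) :
    heatOp (fun q => f q * f q) p ≤ c * pdx (fun q => f q * f q) p := by
  have hf₁ := hf.differentiableAt two_ne_zero
  rw [heatOp_mul hf hf, pdx_mul hf₁ hf₁, h]
  nlinarith [sq_nonneg (pdx f p)]

end PartialDerivatives

theorem heatOp_mul_of_heatOp_eq {v k : ℝ × ℝ → ℝ} {p : ℝ × ℝ} {lam : ℝ}
    (hv : ContDiffAt ℝ 2 v p) (hk : ContDiffAt ℝ 2 k p) (hv0 : v p ≠ 0)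
    (hveq : heatOp v p = -(v p) * (k p) ^ 2 - 2 * (pdx v p) ^ 2 / v p + lam * pdx v p)
    (hkeq : heatOp k p = lam * pdx k p + (k p) ^ 3) :
    heatOp (fun q => v q * k q) p
      = (lam - 2 * pdx v p / v p) * pdx (fun q => v q * k q) p := by
  rw [heatOp_mul hv hk, hveq, hkeq,
    pdx_mul (hv.differentiableAt two_ne_zero) (hk.differentiableAt two_ne_zero)]
  field_simp
  ring

/-- If `v ≠ 0` and `v`, `k` satisfy the stated drift heat equations on an open set `U`, then
`v²k²` satisfies the differential inequality
`∂ₜ(v²k²) − ∂ₓ²(v²k²) ≤ (λ − 2(∂ₓv)/v)·∂ₓ(v²k²)` on `U`. -/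
theorem stmt12 (U : Set (ℝ × ℝ)) (hU : IsOpen U) (v k lam : ℝ × ℝ → ℝ)
    (hv : ContDiffOn ℝ 2 v U) (hk : ContDiffOn ℝ 2 k U)
    (hv0 : ∀ p ∈ U, v p ≠ 0)
    (hveq : ∀ p ∈ U,
      pdt v p - pdx (pdx v) p = -(v p) * (k p) ^ 2 - 2 * (pdx v p) ^ 2 / v p + lam p * pdx v p)
    (hkeq : ∀ p ∈ U, pdt k p - pdx (pdx k) p = lam p * pdx k p + (k p) ^ 3) :
    ∀ p ∈ U,
      pdt (fun q => (v q) ^ 2 * (k q) ^ 2) p - pdx (pdx (fun q => (v q) ^ 2 * (k q) ^ 2)) p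
        ≤ (lam p - 2 * pdx v p / v p) * pdx (fun q => (v q) ^ 2 * (k q) ^ 2) p := by
  intro p hp
  have hvp : ContDiffAt ℝ 2 v p := hv.contDiffAt (hU.mem_nhds hp)
  have hkp : ContDiffAt ℝ 2 k p := hk.contDiffAt (hU.mem_nhds hp)
  have hsq : (fun q => (v q) ^ 2 * (k q) ^ 2) = fun q => (v q * k q) * (v q * k q) := by
    funext q
    ring
  rw [hsq]
  exact heatOp_mul_self_le (hvp.mul hkp)
    (heatOp_mul_of_heatOp_eq hvp hkp (hv0 p hp) (hveq p hp) (hkeq p hp))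
end
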